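/- arXiv:2304.11564 — 5 statements merged into one kernel-verified Lean document; each statement's English description precedes it below -/
import Mathlib

section
/- If Δt is ≺₁-adequate, and conf →_Δt conf₁ with conf ⊨ SP₁, conf₁ ⊨ SP₂, where SP₁ ≠ bad, SP₂ ≠ bad, and (bad is not an immediate predecessor of SP₁ or bad is not an immediate predecessor of SP₂), then for every 0 < Δt' ≤ Δt, the intermediate configuration step Δt' conf does not satisfy bad. -/
/-- `≺₁`-adequacy of the sampling time `Δt`. -/
def Prec1Adequate {Conf S : Type*} (step : ℝ → Conf → Conf)
    (sat : Conf → S → Prop) (prec1 : S → S → Prop) (Δt : ℝ) : Prop :=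
  ∀ c P₁ P₂, sat c P₁ → sat (step Δt c) P₂ →
    ∀ d, 0 < d → d ≤ Δt →
      (P₁ ≠ P₂ → sat (step d c) P₁ ∨ sat (step d c) P₂) ∧
      (P₁ = P₂ → sat (step d c) P₁ ∨
        ∃ P', (prec1 P' P₁ ∨ Relation.TransGen prec1 P₁ P') ∧ sat (step d c) P')

theorem stmt1 {Conf S : Type*} [Fintype S]
    (step : ℝ → Conf → Conf)
    (hstep : ∀ d₁ d₂ : ℝ, 0 ≤ d₁ → 0 ≤ d₂ → ∀ c, step (d₁ + d₂) c = step d₂ (step d₁ c))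
    (prec1 : S → S → Prop)
    (hasym : ∀ a b, prec1 a b → ¬ prec1 b a)
    (hirrefl : ∀ a, ¬ Relation.TransGen prec1 a a)
    (bad : S)
    (hleast : ∀ P, P ≠ bad → Relation.TransGen prec1 bad P)
    (sat : Conf → S → Prop)
    (huniq : ∀ c, ∃! P, sat c P)
    (Δt : ℝ) (hΔt : 0 < Δt)
    (hadeq : Prec1Adequate step sat prec1 Δt)
    (c : Conf) (SP₁ SP₂ : S)
    (h1 : sat c SP₁) (h2 : sat (step Δt c) SP₂)
    (hb1 : SP₁ ≠ bad) (hb2 : SP₂ ≠ bad)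
    (hnp : ¬ prec1 bad SP₁ ∨ ¬ prec1 bad SP₂) :
    ∀ d, 0 < d → d ≤ Δt → ¬ sat (step d c) bad := by
  intro d hd hdΔ hbad
  obtain ⟨hne, huni⟩ := hadeq c SP₁ SP₂ h1 h2 d hd hdΔ
  have uniq := fun P hP P' hP' => ((huniq (step d c)).unique hP hP' : P = P')
  by_cases heq : SP₁ = SP₂
  · rcases huni heq with h | ⟨P', hP', hsat⟩
    · exact hb1 (uniq SP₁ h bad hbad)
    · have : P' = bad := uniq P' hsat bad hbad
      subst this
      rcases hP' with h | h
      · rcases hnp with hn | hn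
        · exact hn h
        · exact hn (heq ▸ h)
      · exact hirrefl SP₁ (h.trans (hleast SP₁ hb1))
  · rcases hne heq with h | h
    · exact hb1 (uniq SP₁ h bad hbad)
    · exact hb2 (uniq SP₂ h bad hbad)
end

section
/- If the sampling time Δt is one-transition adequate, then Δt is ≺₁-adequate. -/
def OneTransAdequate {Conf S : Type*} (step : ℝ → Conf → Conf)
    (sat : Conf → S → Prop) (Δt : ℝ) : Prop :=
  ∀ c P₁ P₂, sat c P₁ → sat (step Δt c) P₂ →
    ∃ d', 0 ≤ d' ∧ d' < Δt ∧
      (∀ d, 0 < d → d < d' → sat (step d c) P₁) ∧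
      (∀ d, d' ≤ d → d < Δt → sat (step d c) P₂)

theorem stmt3 {Conf S : Type*} [Fintype S]
    (step : ℝ → Conf → Conf)
    (hstep : ∀ d₁ d₂ : ℝ, 0 ≤ d₁ → 0 ≤ d₂ → ∀ c, step (d₁ + d₂) c = step d₂ (step d₁ c))
    (prec1 : S → S → Prop)
    (hasym : ∀ a b, prec1 a b → ¬ prec1 b a)
    (hirrefl : ∀ a, ¬ Relation.TransGen prec1 a a)
    (bad : S)
    (hleast : ∀ P, P ≠ bad → Relation.TransGen prec1 bad P)
    (sat : Conf → S → Prop)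
    (huniq : ∀ c, ∃! P, sat c P)
    (Δt : ℝ) (hΔt : 0 < Δt)
    (hadeq : OneTransAdequate step sat Δt) :
    Prec1Adequate step sat prec1 Δt := by
  intro c P₁ P₂ h1 h2 d hd hdΔt
  obtain ⟨d', _, hd'Δt, hA, hB⟩ := hadeq c P₁ P₂ h1 h2
  rcases lt_or_eq_of_le hdΔt with hlt | heq
  · rcases lt_or_ge d d' with h | h
    · have := hA d hd h
      exact ⟨fun _ => Or.inl this, fun _ => Or.inl this⟩
    · have := hB d h hlt
      exact ⟨fun _ => Or.inr this, fun hpq => Or.inl (hpq ▸ this)⟩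
  · subst heq
    exact ⟨fun _ => Or.inr h2, fun hpq => Or.inl (hpq ▸ h2)⟩
end

section
/- If the sampling time Δt is one-transition adequate, then Δt is bad-adequate. -/
def BadAdequate {Conf S : Type*} (step : ℝ → Conf → Conf)
    (sat : Conf → S → Prop) (prec1 : S → S → Prop) (bad : S) (Δt : ℝ) : Prop :=
  ∀ c, (¬ ∃ P, (P = bad ∨ prec1 bad P) ∧ sat c P) →
       (¬ ∃ P, (P = bad ∨ prec1 bad P) ∧ sat (step Δt c) P) →
       ∀ d, 0 < d → d ≤ Δt → ¬ sat (step d c) bad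

theorem stmt4 {Conf S : Type*} [Fintype S]
    (step : ℝ → Conf → Conf)
    (hstep : ∀ d₁ d₂ : ℝ, 0 ≤ d₁ → 0 ≤ d₂ → ∀ c, step (d₁ + d₂) c = step d₂ (step d₁ c))
    (prec1 : S → S → Prop)
    (hasym : ∀ a b, prec1 a b → ¬ prec1 b a)
    (hirrefl : ∀ a, ¬ Relation.TransGen prec1 a a)
    (bad : S)
    (hleast : ∀ P, P ≠ bad → Relation.TransGen prec1 bad P)
    (sat : Conf → S → Prop)
    (huniq : ∀ c, ∃! P, sat c P)
    (Δt : ℝ) (hΔt : 0 < Δt)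
    (hadeq : OneTransAdequate step sat Δt) :
    BadAdequate step sat prec1 bad Δt := by
  intro c h1 h2 d hd hdΔ hbad
  obtain ⟨P₁, hP₁, _⟩ := huniq c
  obtain ⟨P₂, hP₂, _⟩ := huniq (step Δt c)
  have hP₁b : P₁ ≠ bad := fun h => h1 ⟨P₁, Or.inl h, hP₁⟩
  have hP₂b : P₂ ≠ bad := fun h => h2 ⟨P₂, Or.inl h, hP₂⟩
  obtain ⟨d', _, hd'Δ, hlo, hhi⟩ := hadeq c P₁ P₂ hP₁ hP₂
  rcases eq_or_lt_of_le hdΔ with rfl | hlt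
  · obtain ⟨Q, _, hQu⟩ := huniq (step d c)
    exact hP₂b ((hQu P₂ hP₂).trans (hQu bad hbad).symm)
  · obtain ⟨Q, _, hQu⟩ := huniq (step d c)
    rcases lt_or_ge d d' with h | h
    · exact hP₁b ((hQu P₁ (hlo d hd h)).trans (hQu bad hbad).symm)
    · exact hP₂b ((hQu P₂ (hhi d h hlt)).trans (hQu bad hbad).symm)
end

section
/- If Δt is ≺₁-adequate, then Δt is bad-adequate. -/
theorem stmt5 {Conf S : Type*} [Fintype S]
    (step : ℝ → Conf → Conf)
    (hstep : ∀ d₁ d₂ : ℝ, 0 ≤ d₁ → 0 ≤ d₂ → ∀ c, step (d₁ + d₂) c = step d₂ (step d₁ c))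
    (prec1 : S → S → Prop)
    (hasym : ∀ a b, prec1 a b → ¬ prec1 b a)
    (hirrefl : ∀ a, ¬ Relation.TransGen prec1 a a)
    (bad : S)
    (hleast : ∀ P, P ≠ bad → Relation.TransGen prec1 bad P)
    (sat : Conf → S → Prop)
    (huniq : ∀ c, ∃! P, sat c P)
    (Δt : ℝ) (hΔt : 0 < Δt)
    (hadeq : Prec1Adequate step sat prec1 Δt) :
    BadAdequate step sat prec1 bad Δt := by
  intro c hc hΔ d hd hdΔ hbad
  obtain ⟨P₁, hP₁, _⟩ := huniq c
  obtain ⟨P₂, hP₂, _⟩ := huniq (step Δt c)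
  obtain ⟨hu, _⟩ := huniq (step d c)
  have h1 : ¬ (P₁ = bad ∨ prec1 bad P₁) := fun h => hc ⟨P₁, h, hP₁⟩
  have h2 : ¬ (P₂ = bad ∨ prec1 bad P₂) := fun h => hΔ ⟨P₂, h, hP₂⟩
  obtain ⟨ha, hb⟩ := hadeq c P₁ P₂ hP₁ hP₂ d hd hdΔ
  by_cases heq : P₁ = P₂
  · rcases hb heq with h | ⟨P', hP', hsat⟩
    · exact h1 (Or.inl ((huniq (step d c)).unique h hbad))
    · have hPb : P' = bad := (huniq (step d c)).unique hsat hbad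
      rw [hPb] at hP'
      rcases hP' with h | h
      · exact h1 (Or.inr h)
      · have hne : P₁ ≠ bad := fun h' => h1 (Or.inl h')
        exact hirrefl bad ((hleast P₁ hne).trans h)
  · rcases ha heq with h | h
    · exact h1 (Or.inl ((huniq (step d c)).unique h hbad))
    · exact h2 (Or.inl ((huniq (step d c)).unique h hbad))
end

section
/- Suppose every configuration in every execution trace of a system can be uniquely partitioned into alternating 'normal' segments (all sampled configurations satisfy a property strictly above SP_safe) and 'recovery' segments (starting at a configuration satisfying SP_safe and ending at the first later sampled configuration satisfying SP_safer or safer), given that Δt does not skip SP_safe and recovery always succeeds within t steps. Formally: if (a) for every index i with confᵢ ⊨ SP_safe there exists j with i < j ≤ i + t and conf_j ⊨ SP with SP_safer ⪯ SP, and (b) Δt does not skip SP_safe, then for every i, either confᵢ satisfies a property SP with SP_safe ⪯ SP, or there exists k ≤ i with conf_k ⊨ SP_safe and i - k < t. -/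
theorem stmt16 {S : Type*} [Fintype S]
    (lt : S → S → Prop)
    (hirrefl : ∀ a, ¬ lt a a)
    (htrans : ∀ a b c, lt a b → lt b c → lt a c)
    (htotal : ∀ a b : S, a ≠ b → lt a b ∨ lt b a)
    (bad SPsafe SPsafer : S)
    (hleast : ∀ P, P ≠ bad → lt bad P)
    (hsafe : lt SPsafe SPsafer)
    (t : ℕ) (ht : 0 < t)
    -- `prop i` is the unique property satisfied by the `i`-th sampled configuration
    (prop : ℕ → S)
    -- the trace starts at risk level `⪰ SP_safe`
    (hstart : prop 0 = SPsafe ∨ lt SPsafe (prop 0))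
    -- (a) recovery always succeeds within `t` steps
    (hrec : ∀ i, prop i = SPsafe →
      ∃ j, i < j ∧ j ≤ i + t ∧ (SPsafer = prop j ∨ lt SPsafer (prop j)))
    -- (b) `Δt` does not skip `SP_safe` along the trace
    (hnoskip : ¬ ∃ i, lt SPsafe (prop i) ∧ lt (prop (i + 1)) SPsafe) :
    ∀ i, (prop i = SPsafe ∨ lt SPsafe (prop i)) ∨
      ∃ k, k ≤ i ∧ prop k = SPsafe ∧ i - k < t := by
  push_neg at hnoskip
  -- trichotomy helper
  have tri : ∀ a : S, lt SPsafe a ∨ a = SPsafe ∨ lt a SPsafe := by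
    intro a
    by_cases h : a = SPsafe
    · exact Or.inr (Or.inl h)
    · rcases htotal a SPsafe h with h1 | h1
      · exact Or.inr (Or.inr h1)
      · exact Or.inl h1
  -- key lemma: between an index above SPsafe and a later index below SPsafe
  -- there is an intermediate index exactly at SPsafe
  have key : ∀ n j, lt SPsafe (prop j) → lt (prop (j + n)) SPsafe →
      ∃ m, j < m ∧ m < j + n ∧ prop m = SPsafe := by
    intro n
    induction n with
    | zero =>
      intro j h1 h2
      exact absurd (htrans _ _ _ h1 h2) (hirrefl _)
    | succ n ih =>
      intro j h1 h2
      rcases tri (prop (j + 1)) with h3 | h3 | h3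
      · rcases ih (j + 1) h3 (by
          have : j + 1 + n = j + (n + 1) := by ring
          rw [this]; exact h2) with ⟨m, hm1, hm2, hm3⟩
        exact ⟨m, by omega, by omega, hm3⟩
      · rcases Nat.eq_zero_or_pos n with hn | hn
        · subst hn
          rw [h3] at h2
          exact absurd h2 (hirrefl _)
        · exact ⟨j + 1, by omega, by omega, h3⟩
      · exact absurd h3 (hnoskip j h1)
  intro i
  induction i with
  | zero => exact Or.inl hstart
  | succ i ih =>
    rcases tri (prop (i + 1)) with h | h | h
    · exact Or.inl (Or.inr h)
    · exact Or.inl (Or.inl h)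
    -- prop (i+1) is strictly below SPsafe
    rcases ih with (hi | hi) | ⟨k, hk1, hk2, hk3⟩
    · -- prop i = SPsafe
      rcases hrec i hi with ⟨j, hj1, hj2, hj3⟩
      have hjsafe : lt SPsafe (prop j) := by
        rcases hj3 with h' | h'
        · rw [← h']; exact hsafe
        · exact htrans _ _ _ hsafe h'
      have hji : j ≠ i + 1 := by
        intro he; subst he
        exact hirrefl _ (htrans _ _ _ hjsafe h)
      have ht2 : 2 ≤ t := by omega
      exact Or.inr ⟨i, by omega, hi, by omega⟩
    · -- prop i > SPsafe : contradicts noskip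
      exact absurd h (hnoskip i hi)
    · by_cases hlt : i + 1 - k < t
      · exact Or.inr ⟨k, by omega, hk2, hlt⟩
      · have hkt : i + 1 = k + t := by omega
        rcases hrec k hk2 with ⟨j, hj1, hj2, hj3⟩
        have hjsafe : lt SPsafe (prop j) := by
          rcases hj3 with h' | h'
          · rw [← h']; exact hsafe
          · exact htrans _ _ _ hsafe h'
        have hji : j ≠ i + 1 := by
          intro he; subst he
          exact hirrefl _ (htrans _ _ _ hjsafe h)
        have hjle : j ≤ i := by omega
        rcases key (i + 1 - j) j hjsafe (by
          have : j + (i + 1 - j) = i + 1 := by omega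
          rw [this]; exact h) with ⟨m, hm1, hm2, hm3⟩
        exact Or.inr ⟨m, by omega, hm3, by omega⟩
end
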